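/- arXiv:2201.09191 — 2 statements merged into one kernel-verified Lean document; each statement's English description precedes it below -/
import Mathlib

section
/- Suppose q_0 : ℝ^{D×N} → Δ^{N-1} is permutation-equivariant, i.e., q_0(X_π) = π applied to q_0(X) for every column permutation π. If P*(X) is the unique minimizer of the strictly convex UOT objective ⟨−X,P⟩ + α_0 R(P) + α_1 KL(P1_N | p_0) + α_2 KL(Pᵀ1_D | q_0(X)) over matrices P with positive entries, where R is either the entropic regularizer ⟨P, log P − 1⟩ or the quadratic regularizer ⟨P,P⟩, then P*(X_π) = (P*(X))_π, i.e., P* is permutation-equivariant in the columns. -/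
/-- Entropic regularizer `⟨P, log P − 1⟩`. -/
noncomputable def entReg {D N : ℕ} (P : Matrix (Fin D) (Fin N) ℝ) : ℝ :=
  ∑ d, ∑ n, P d n * (Real.log (P d n) - 1)

/-- Quadratic regularizer `⟨P, P⟩`. -/
def quadReg {D N : ℕ} (P : Matrix (Fin D) (Fin N) ℝ) : ℝ :=
  ∑ d, ∑ n, P d n * P d n

/-- KL divergence between positive vectors. -/
noncomputable def KLvec {k : ℕ} (a b : Fin k → ℝ) : ℝ :=
  ∑ i, (a i * (Real.log (a i) - Real.log (b i)) - (a i - b i))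

/-!
If `P` minimizes `J X` then `P_π` minimizes `J X_π`, because the column permutation `P ↦ P_π`
preserves positivity and `J X_π (P_π) = J X P`: the linear term and both regularizers are sums
over all entries, the row marginals of `P_π` are those of `P`, and the column marginals of `P_π`
and the reference marginal `q₀(X_π) = q₀(X)_π` are permuted together, which leaves the KL term
unchanged. Uniqueness of the minimizer then forces `P*(X_π) = P*(X)_π`.
-/

theorem eq_of_unique_minimizers_of_comp_equiv {α β γ : Type*} [Preorder γ] {F : α → γ}
    {G : β → γ} (e : α ≃ β) {S : Set α} {T : Set β} (hST : ∀ x, e x ∈ T ↔ x ∈ S) (hGF : ∀ x, G (e x) = F x)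
    {a : α} {b : β} (ha : a ∈ S) (hb : b ∈ T)
    (haF : ∀ x ∈ S, x ≠ a → F a < F x) (hbG : ∀ y ∈ T, y ≠ b → G b < G y) :
    b = e a := by
  by_contra hne
  have hea : e a ∈ T := (hST a).2 ha
  have hsb : e.symm b ∈ S := (hST _).1 (by simpa using hb)
  have hsb_ne : e.symm b ≠ a := fun h => hne (by rw [← h, Equiv.apply_symm_apply])
  have hG : G b < F a := hGF a ▸ hbG _ hea (Ne.symm hne)
  have hF : F a < G b := by simpa [← hGF] using haF _ hsb hsb_ne
  exact lt_asymm hG hF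

theorem KLvec_comp_perm {k : ℕ} (a b : Fin k → ℝ) (π : Equiv.Perm (Fin k)) :
    KLvec (a ∘ π) (b ∘ π) = KLvec a b :=
  Equiv.sum_comp π fun i => a i * (Real.log (a i) - Real.log (b i)) - (a i - b i)

section ColumnPermutation

variable {D N : ℕ} (π : Equiv.Perm (Fin N))

theorem sum_submatrix_id_perm (f : Matrix (Fin D) (Fin N) ℝ) :
    ∑ d, ∑ n, f.submatrix id π d n = ∑ d, ∑ n, f d n :=
  Finset.sum_congr rfl fun d _ => Equiv.sum_comp π (f d)

theorem entReg_submatrix_perm (P : Matrix (Fin D) (Fin N) ℝ) :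
    entReg (P.submatrix id π) = entReg P :=
  sum_submatrix_id_perm π fun d n => P d n * (Real.log (P d n) - 1)

theorem quadReg_submatrix_perm (P : Matrix (Fin D) (Fin N) ℝ) :
    quadReg (P.submatrix id π) = quadReg P :=
  sum_submatrix_id_perm π fun d n => P d n * P d n

noncomputable def uotObjective (α0 α1 α2 : ℝ) (p0 : Fin D → ℝ)
    (R : Matrix (Fin D) (Fin N) ℝ → ℝ) (q : Fin N → ℝ) (X P : Matrix (Fin D) (Fin N) ℝ) : ℝ :=
  (∑ d, ∑ n, (-(X d n)) * P d n) + α0 * R P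
    + α1 * KLvec (fun d => ∑ n, P d n) p0
    + α2 * KLvec (fun n => ∑ d, P d n) q

theorem uotObjective_submatrix_perm (α0 α1 α2 : ℝ) (p0 : Fin D → ℝ)
    {R : Matrix (Fin D) (Fin N) ℝ → ℝ} (hR : ∀ P, R (P.submatrix id π) = R P)
    (q : Fin N → ℝ) (X P : Matrix (Fin D) (Fin N) ℝ) :
    uotObjective α0 α1 α2 p0 R (q ∘ π) (X.submatrix id π) (P.submatrix id π)
      = uotObjective α0 α1 α2 p0 R q X P := by
  have hlin : ∑ d, ∑ n, -(X.submatrix id π d n) * P.submatrix id π d n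
      = ∑ d, ∑ n, -(X d n) * P d n :=
    sum_submatrix_id_perm π fun d n => -(X d n) * P d n
  have hrow : (fun d => ∑ n, P.submatrix id π d n) = fun d => ∑ n, P d n :=
    funext fun d => Equiv.sum_comp π (P d)
  have hcol : KLvec (fun n => ∑ d, P.submatrix id π d n) (q ∘ π)
      = KLvec (fun n => ∑ d, P d n) q :=
    KLvec_comp_perm (fun n => ∑ d, P d n) q π
  unfold uotObjective
  rw [hlin, hR, hrow, hcol]

end ColumnPermutation

theorem stmt_2_general (D N : ℕ) (α0 α1 α2 : ℝ)
    (p0 : Fin D → ℝ)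
    (R : Matrix (Fin D) (Fin N) ℝ → ℝ) (hR : R = entReg ∨ R = quadReg)
    (q0 : Matrix (Fin D) (Fin N) ℝ → (Fin N → ℝ))
    (hq0equiv : ∀ (X : Matrix (Fin D) (Fin N) ℝ) (π : Equiv.Perm (Fin N)),
      q0 (X.submatrix id ⇑π) = (q0 X) ∘ ⇑π)
    (J : Matrix (Fin D) (Fin N) ℝ → Matrix (Fin D) (Fin N) ℝ → ℝ)
    (hJ : ∀ X P, J X P = (∑ d, ∑ n, (-(X d n)) * P d n) + α0 * R P
        + α1 * KLvec (fun d => ∑ n, P d n) p0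
        + α2 * KLvec (fun n => ∑ d, P d n) (q0 X))
    (Pstar : Matrix (Fin D) (Fin N) ℝ → Matrix (Fin D) (Fin N) ℝ)
    (hpos : ∀ X d n, 0 < Pstar X d n)
    (hmin : ∀ X P, (∀ d n, 0 < P d n) → P ≠ Pstar X → J X (Pstar X) < J X P)
    (X : Matrix (Fin D) (Fin N) ℝ) (π : Equiv.Perm (Fin N)) :
    Pstar (X.submatrix id ⇑π) = (Pstar X).submatrix id ⇑π := by
  have hRπ : ∀ P : Matrix (Fin D) (Fin N) ℝ, R (P.submatrix id π) = R P := by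
    rcases hR with rfl | rfl
    exacts [entReg_submatrix_perm π, quadReg_submatrix_perm π]
  have hJπ : ∀ P, J (X.submatrix id π) (P.submatrix id π) = J X P := fun P => by
    rw [hJ, hJ, hq0equiv]
    exact uotObjective_submatrix_perm π α0 α1 α2 p0 hRπ (q0 X) X P
  let permCols : Matrix (Fin D) (Fin N) ℝ ≃ Matrix (Fin D) (Fin N) ℝ :=
    Matrix.reindex (Equiv.refl _) π.symm
  let positive : Set (Matrix (Fin D) (Fin N) ℝ) := {P | ∀ d n, 0 < P d n}
  have hpositive : ∀ P, permCols P ∈ positive ↔ P ∈ positive := fun P =>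
    ⟨fun h d n => by simpa [permCols] using h d (π.symm n), fun h d n => h d (π n)⟩
  exact eq_of_unique_minimizers_of_comp_equiv permCols hpositive hJπ (hpos X) (hpos _)
    (hmin X) (hmin _)

/-- If `q₀` is permutation-equivariant and `P*` is the unique minimizer of the UOT
objective over positive matrices, then `P*` is permutation-equivariant in columns. -/
theorem stmt_2 (D N : ℕ) (α0 α1 α2 : ℝ) (h0 : 0 < α0) (h1 : 0 < α1) (h2 : 0 < α2)
    (p0 : Fin D → ℝ) (hp0 : ∀ d, 0 < p0 d) (hp0s : ∑ d, p0 d = 1)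
    (R : Matrix (Fin D) (Fin N) ℝ → ℝ) (hR : R = entReg ∨ R = quadReg)
    (q0 : Matrix (Fin D) (Fin N) ℝ → (Fin N → ℝ))
    (hq0pos : ∀ X n, 0 < q0 X n) (hq0sum : ∀ X, ∑ n, q0 X n = 1)
    (hq0equiv : ∀ (X : Matrix (Fin D) (Fin N) ℝ) (π : Equiv.Perm (Fin N)),
      q0 (X.submatrix id ⇑π) = (q0 X) ∘ ⇑π)
    (J : Matrix (Fin D) (Fin N) ℝ → Matrix (Fin D) (Fin N) ℝ → ℝ)
    (hJ : ∀ X P, J X P = (∑ d, ∑ n, (-(X d n)) * P d n) + α0 * R P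
        + α1 * KLvec (fun d => ∑ n, P d n) p0
        + α2 * KLvec (fun n => ∑ d, P d n) (q0 X))
    (Pstar : Matrix (Fin D) (Fin N) ℝ → Matrix (Fin D) (Fin N) ℝ)
    (hpos : ∀ X d n, 0 < Pstar X d n)
    (hmin : ∀ X P, (∀ d n, 0 < P d n) → P ≠ Pstar X → J X (Pstar X) < J X P)
    (X : Matrix (Fin D) (Fin N) ℝ) (π : Equiv.Perm (Fin N)) :
    Pstar (X.submatrix id ⇑π) = (Pstar X).submatrix id ⇑π :=
  stmt_2_general D N α0 α1 α2 p0 R hR q0 hq0equiv J hJ Pstar hpos hmin X π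
end

section
/- For marginals p = (1/D)1_D and a strictly positive q = a ∈ Δ^{N-1}, the unique minimizer of the entropic regularizer R(P)=⟨P, log P − 1⟩ over Π(p, a) is the rank-one matrix P* = (1/D)1_D aᵀ, and the resulting pooling f(X) = (X ⊙ (diag(P*1_N)^{-1} P*))1_N equals attention-pooling: f(X) = X a. -/
/-!
Every coupling `P ∈ Π(p, a)` has the same cross term `∑ P log (p ⊗ a) = ∑ p log p + ∑ a log a`,
because `log (pᵢ aⱼ)` splits into a row part and a column part. Hence
`R(P) - R(p ⊗ a) = ∑ pᵢ aⱼ · klFun (Pᵢⱼ / (pᵢ aⱼ))`, which is nonnegative and vanishes only at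
`P = p ⊗ a`. Row-normalizing the rank-one matrix `p ⊗ a` returns `a` in every row.
-/

open Real Finset Matrix InformationTheory

lemma mul_klFun_div_eq {p q : ℝ} (hq : q ≠ 0) :
    q * klFun (p / q) = p * log p - p * log q - p + q := by
  rcases eq_or_ne p 0 with rfl | hp
  · simp [klFun_zero]
  · rw [klFun_apply, log_div hp hq]
    field_simp
    ring

lemma mul_klFun_div_nonneg {p q : ℝ} (hp : 0 ≤ p) (hq : 0 < q) : 0 ≤ q * klFun (p / q) :=
  mul_nonneg hq.le (klFun_nonneg (div_nonneg hp hq.le))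

lemma mul_klFun_div_eq_zero_iff {p q : ℝ} (hp : 0 ≤ p) (hq : 0 < q) :
    q * klFun (p / q) = 0 ↔ p = q := by
  rw [mul_eq_zero, klFun_eq_zero_iff (div_nonneg hp hq.le), div_eq_one_iff_eq hq.ne',
    or_iff_right hq.ne']

section Coupling

variable {ι κ : Type*} [Fintype ι] [Fintype κ]

/-- The transport polytope `Π(p, a)`. -/
def transportPolytope (p : ι → ℝ) (a : κ → ℝ) : Set (Matrix ι κ ℝ) :=
  {P | (∀ i j, 0 ≤ P i j) ∧ (∀ i, ∑ j, P i j = p i) ∧ ∀ j, ∑ i, P i j = a j}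

/-- The entropic regularizer `R(P) = ⟨P, log P - 1⟩`. -/
noncomputable def entropicReg (P : Matrix ι κ ℝ) : ℝ :=
  ∑ i, ∑ j, P i j * (log (P i j) - 1)

variable {P : Matrix ι κ ℝ} {p : ι → ℝ} {a : κ → ℝ}

lemma sum_sum_mul_log_vecMulVec (hp : ∀ i, p i ≠ 0) (ha : ∀ j, a j ≠ 0)
    (hrow : ∀ i, ∑ j, P i j = p i) (hcol : ∀ j, ∑ i, P i j = a j) :
    ∑ i, ∑ j, P i j * log (vecMulVec p a i j) =
      ∑ i, p i * log (p i) + ∑ j, a j * log (a j) := by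
  simp only [vecMulVec_apply, log_mul (hp _) (ha _), mul_add, sum_add_distrib]
  congr 1
  · simp only [← sum_mul, hrow]
  · rw [sum_comm]
    simp only [← sum_mul, hcol]

lemma entropicReg_sub_entropicReg_vecMulVec (hp : ∀ i, p i ≠ 0) (ha : ∀ j, a j ≠ 0)
    (has : ∑ j, a j = 1)
    (hrow : ∀ i, ∑ j, P i j = p i) (hcol : ∀ j, ∑ i, P i j = a j) :
    entropicReg P - entropicReg (vecMulVec p a) =
      ∑ i, ∑ j, vecMulVec p a i j * klFun (P i j / vecMulVec p a i j) := by
  have hps : ∑ i, p i = 1 := by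
    rw [← has, ← sum_congr rfl fun i _ => hrow i, ← sum_congr rfl fun j _ => hcol j, sum_comm]
  have hrowQ : ∀ i, ∑ j, vecMulVec p a i j = p i := fun i => by
    simp only [vecMulVec_apply, ← mul_sum, has, mul_one]
  have hcolQ : ∀ j, ∑ i, vecMulVec p a i j = a j := fun j => by
    simp only [vecMulVec_apply, ← sum_mul, hps, one_mul]
  have hcross := (sum_sum_mul_log_vecMulVec hp ha hrow hcol).trans
    (sum_sum_mul_log_vecMulVec hp ha hrowQ hcolQ).symm
  have hmass : ∑ i, ∑ j, P i j = ∑ i, ∑ j, vecMulVec p a i j := by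
    simp only [hrow, hrowQ]
  simp only [entropicReg, vecMulVec_apply, mul_klFun_div_eq (mul_ne_zero (hp _) (ha _)),
    mul_sub, mul_one, sum_add_distrib, sum_sub_distrib] at hcross hmass ⊢
  linarith

lemma entropicReg_vecMulVec_le (hp : ∀ i, 0 < p i) (ha : ∀ j, 0 < a j) (has : ∑ j, a j = 1)
    (hP : P ∈ transportPolytope p a) :
    entropicReg (vecMulVec p a) ≤ entropicReg P := by
  obtain ⟨hP0, hrow, hcol⟩ := hP
  have hdiff := entropicReg_sub_entropicReg_vecMulVec (fun i => (hp i).ne') (fun j => (ha j).ne')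
    has hrow hcol
  have hgap : 0 ≤ ∑ i, ∑ j, vecMulVec p a i j * klFun (P i j / vecMulVec p a i j) :=
    sum_nonneg fun i _ => sum_nonneg fun j _ =>
      mul_klFun_div_nonneg (hP0 i j) (mul_pos (hp i) (ha j))
  linarith

lemma eq_vecMulVec_of_entropicReg_eq (hp : ∀ i, 0 < p i) (ha : ∀ j, 0 < a j)
    (has : ∑ j, a j = 1) (hP : P ∈ transportPolytope p a)
    (heq : entropicReg (vecMulVec p a) = entropicReg P) :
    P = vecMulVec p a := by
  obtain ⟨hP0, hrow, hcol⟩ := hP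
  have hdiff := entropicReg_sub_entropicReg_vecMulVec (fun i => (hp i).ne') (fun j => (ha j).ne')
    has hrow hcol
  have hterm (i : ι) (j : κ) : 0 ≤ vecMulVec p a i j * klFun (P i j / vecMulVec p a i j) :=
    mul_klFun_div_nonneg (hP0 i j) (mul_pos (hp i) (ha j))
  have hgap : ∑ i, ∑ j, vecMulVec p a i j * klFun (P i j / vecMulVec p a i j) = 0 := by
    linarith
  ext i j
  rw [Fintype.sum_eq_zero_iff_of_nonneg fun i => sum_nonneg fun j _ => hterm i j] at hgap
  have hij := (Fintype.sum_eq_zero_iff_of_nonneg (hterm i)).mp (congrFun hgap i)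
  exact (mul_klFun_div_eq_zero_iff (hP0 i j) (mul_pos (hp i) (ha j))).mp (congrFun hij j)

end Coupling

lemma vecMulVec_apply_div_sum {ι κ : Type*} [Fintype κ] {p : ι → ℝ} {a : κ → ℝ} {i : ι}
    (hp : p i ≠ 0) (has : ∑ j, a j = 1) (j : κ) :
    vecMulVec p a i j / ∑ k, vecMulVec p a i k = a j := by
  simp only [vecMulVec_apply, ← mul_sum, has, mul_one, mul_div_cancel_left₀ _ hp]

theorem stmt_8_general (D N : ℕ)
    (a : Fin N → ℝ) (ha : ∀ n, 0 < a n) (has : ∑ n, a n = 1)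
    (X : Matrix (Fin D) (Fin N) ℝ)
    (Pstar : Matrix (Fin D) (Fin N) ℝ)
    (hPstar : Pstar = fun d n => (1 / (D : ℝ)) * a n) :
    (∀ P : Matrix (Fin D) (Fin N) ℝ, (∀ d n, 0 ≤ P d n) →
      (∀ d, ∑ n, P d n = 1 / (D : ℝ)) → (∀ n, ∑ d, P d n = a n) →
      ((∑ d, ∑ n, Pstar d n * (Real.log (Pstar d n) - 1))
          ≤ ∑ d, ∑ n, P d n * (Real.log (P d n) - 1)
        ∧ ((∑ d, ∑ n, Pstar d n * (Real.log (Pstar d n) - 1))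
            = (∑ d, ∑ n, P d n * (Real.log (P d n) - 1)) → P = Pstar)))
    ∧ (∀ d, ∑ n, X d n * (Pstar d n / ∑ m, Pstar d m) = ∑ n, X d n * a n) := by
  obtain rfl : Pstar = vecMulVec (fun _ => 1 / (D : ℝ)) a := hPstar
  have hrow_pos (d : Fin D) : 0 < 1 / (D : ℝ) := one_div_pos.mpr (Nat.cast_pos.mpr d.pos)
  refine ⟨fun P hP0 hrow hcol => ?_, fun d => ?_⟩
  · have hP : P ∈ transportPolytope (fun _ => 1 / (D : ℝ)) a := ⟨hP0, hrow, hcol⟩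
    exact ⟨entropicReg_vecMulVec_le hrow_pos ha has hP,
      eq_vecMulVec_of_entropicReg_eq hrow_pos ha has hP⟩
  · simp only [vecMulVec_apply_div_sum (p := fun _ => 1 / (D : ℝ)) (hrow_pos d).ne' has]

/-- For marginals `p = (1/D)·1` and a strictly positive `a ∈ Δ^{N-1}`, the entropic
regularizer is uniquely minimized over `Π(p,a)` by `(1/D)·1 aᵀ`, and the resulting
pooling equals attention-pooling `X a`. -/
theorem stmt_8 (D N : ℕ) (hD : 0 < D)
    (a : Fin N → ℝ) (ha : ∀ n, 0 < a n) (has : ∑ n, a n = 1)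
    (X : Matrix (Fin D) (Fin N) ℝ)
    (Pstar : Matrix (Fin D) (Fin N) ℝ)
    (hPstar : Pstar = fun d n => (1 / (D : ℝ)) * a n) :
    (∀ P : Matrix (Fin D) (Fin N) ℝ, (∀ d n, 0 ≤ P d n) →
      (∀ d, ∑ n, P d n = 1 / (D : ℝ)) → (∀ n, ∑ d, P d n = a n) →
      ((∑ d, ∑ n, Pstar d n * (Real.log (Pstar d n) - 1))
          ≤ ∑ d, ∑ n, P d n * (Real.log (P d n) - 1)
        ∧ ((∑ d, ∑ n, Pstar d n * (Real.log (Pstar d n) - 1))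
            = (∑ d, ∑ n, P d n * (Real.log (P d n) - 1)) → P = Pstar)))
    ∧ (∀ d, ∑ n, X d n * (Pstar d n / ∑ m, Pstar d m) = ∑ n, X d n * a n) :=
  stmt_8_general D N a ha has X Pstar hPstar
end
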